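/- For every integer a > 2 and every real number x ≥ 2, the derivative satisfies Δ_{a,0}′(x) > 0. -/
import Mathlib


open Polynomial Finset

/-- The polynomials `P n` defined by `P 0 = 1` and
`n * P n = X * ∑_{k=1}^n σ(k) * P (n-k)`, i.e. the coefficients of
`∏ (1 - q^j)^{-x} = ∑ P_n(x) q^n`. -/
noncomputable def P : ℕ → Polynomial ℝ
  | 0 => 1
  | n + 1 => ((n + 1 : ℝ)⁻¹) • (X * ∑ k ∈ Finset.range (n + 1),
      ((∑ d ∈ (k + 1).divisors, d : ℕ) : ℝ) • P (n - k))

/-- `Δ a b = P (a-1) * P (b+1) - P a * P b`. -/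
noncomputable def Δ (a b : ℕ) : Polynomial ℝ :=
  P (a - 1) * P (b + 1) - P a * P b

/-! Auxiliary development -/


noncomputable def sg (k : ℕ) : ℝ := ((∑ d ∈ k.divisors, d : ℕ) : ℝ)

noncomputable def p (x : ℝ) (n : ℕ) : ℝ := (P n).eval x

noncomputable def dd (x : ℝ) (n : ℕ) : ℝ := (Polynomial.derivative (P n)).eval x

lemma p_zero (x : ℝ) : p x 0 = 1 := by simp [p, P]

lemma sg_nonneg (m : ℕ) : 0 ≤ sg m := by unfold sg; positivity

lemma sg_one : sg 1 = 1 := by simp [sg]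

lemma le_sg (m : ℕ) (hm : 1 ≤ m) : (m : ℝ) ≤ sg m := by
  have h : m ∈ m.divisors := Nat.mem_divisors_self m (by omega)
  have := Finset.single_le_sum (f := fun d : ℕ => d) (fun i _ => Nat.zero_le i) h
  exact_mod_cast Nat.cast_le.mpr this

lemma one_le_sg (m : ℕ) (hm : 1 ≤ m) : (1 : ℝ) ≤ sg m :=
  le_trans (by exact_mod_cast hm) (le_sg m hm)

lemma sg_lt (m : ℕ) (hm : 2 ≤ m) : sg m < (m : ℝ) ^ 2 := by
  have hsub : m.divisors ⊆ Finset.Icc 1 m := by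
    intro d hd
    simp only [Finset.mem_Icc]
    exact ⟨Nat.pos_of_mem_divisors hd, Nat.divisor_le hd⟩
  have h1 : (∑ d ∈ m.divisors, d) ≤ ∑ d ∈ Finset.Icc 1 m, d :=
    Finset.sum_le_sum_of_subset hsub
  have h2 : (∑ d ∈ Finset.Icc 1 m, d) * 2 = (m + 1) * m := by
    have h3 : ∑ d ∈ Finset.Icc 1 m, d = ∑ d ∈ Finset.range (m + 1), d := by
      rw [← Finset.Ico_add_one_right_eq_Icc, Finset.sum_Ico_eq_sum_range, Finset.sum_range_succ']
      simp [add_comm]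
    rw [h3]
    simpa using Finset.sum_range_id_mul_two (m + 1)
  have h5 : (∑ d ∈ m.divisors, d) < m * m := by nlinarith
  have : ((∑ d ∈ m.divisors, d : ℕ) : ℝ) < ((m * m : ℕ) : ℝ) := by exact_mod_cast h5
  simpa [sg, pow_two] using this

lemma p_succ (x : ℝ) (n : ℕ) :
    ((n : ℝ) + 1) * p x (n + 1) = x * ∑ k ∈ range (n + 1), sg (k + 1) * p x (n - k) := by
  have h : ((n : ℝ) + 1) ≠ 0 := by positivity
  simp only [p, P, sg, eval_smul, eval_mul, eval_X, eval_finset_sum, smul_eq_mul]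
  field_simp

lemma p_rec' (x : ℝ) (n : ℕ) :
    x * ∑ k ∈ range n, sg (k + 1) * p x (n - 1 - k) = (n : ℝ) * p x n := by
  cases n with
  | zero => simp
  | succ m =>
      have := p_succ x m
      push_cast
      rw [← this]

noncomputable def q (x : ℝ) : ℕ → ℝ
  | 0 => 1
  | n + 1 => p x (n + 1) - p x n

lemma sum_q (x : ℝ) (n : ℕ) : ∑ j ∈ range (n + 1), q x j = p x n := by
  induction n with
  | zero => simp [q, p_zero]
  | succ m ih => rw [Finset.sum_range_succ, ih]; simp [q]

lemma q_succ (x : ℝ) (n : ℕ) :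
    ((n : ℝ) + 1) * q x (n + 1) =
      ∑ k ∈ range (n + 1), (x * sg (k + 1) - 1) * q x (n - k) := by
  have hq : ∑ k ∈ range (n + 1), q x (n - k) = p x n := by
    have h := Finset.sum_range_reflect (q x) (n + 1)
    calc ∑ k ∈ range (n + 1), q x (n - k)
        = ∑ k ∈ range (n + 1), q x (n + 1 - 1 - k) := by norm_num
      _ = ∑ j ∈ range (n + 1), q x j := h
      _ = p x n := sum_q x n
  have hsplit : ∑ k ∈ range (n + 1), sg (k + 1) * q x (n - k)
      = (∑ k ∈ range (n + 1), sg (k + 1) * p x (n - k))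
        - ∑ k ∈ range n, sg (k + 1) * p x (n - 1 - k) := by
    rw [Finset.sum_range_succ, Finset.sum_range_succ (fun k => sg (k + 1) * p x (n - k))]
    have h0 : q x (n - n) = p x (n - n) := by simp [q, p_zero]
    have hterm : ∀ k ∈ range n, sg (k + 1) * q x (n - k)
        = sg (k + 1) * p x (n - k) - sg (k + 1) * p x (n - 1 - k) := by
      intro k hk
      have hk' : k < n := Finset.mem_range.mp hk
      have h1 : n - k = (n - 1 - k) + 1 := by omega
      rw [h1]
      simp only [q]
      ring
    rw [Finset.sum_congr rfl hterm, Finset.sum_sub_distrib, h0]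
    ring
  have hexp : ∑ k ∈ range (n + 1), (x * sg (k + 1) - 1) * q x (n - k)
      = x * (∑ k ∈ range (n + 1), sg (k + 1) * q x (n - k))
        - ∑ k ∈ range (n + 1), q x (n - k) := by
    rw [Finset.mul_sum, ← Finset.sum_sub_distrib]
    exact Finset.sum_congr rfl fun k _ => by ring
  rw [hexp, hsplit, hq, mul_sub, p_rec' x n, ← p_succ x n]
  simp only [q]
  ring

lemma q_nonneg (x : ℝ) (hx : 2 ≤ x) : ∀ n, 0 ≤ q x n := by
  intro n
  induction n using Nat.strong_induction_on with
  | _ n ih =>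
    match n with
    | 0 => norm_num [q]
    | m + 1 =>
      have h := q_succ x m
      have hsum : 0 ≤ ∑ k ∈ range (m + 1), (x * sg (k + 1) - 1) * q x (m - k) := by
        apply Finset.sum_nonneg
        intro k hk
        apply mul_nonneg
        · have := one_le_sg (k + 1) (by omega)
          nlinarith
        · exact ih (m - k) (by omega)
      nlinarith

lemma dd_zero (x : ℝ) : dd x 0 = 0 := by simp [dd, P]

lemma dd_succ (x : ℝ) (n : ℕ) :
    ((n : ℝ) + 1) * dd x (n + 1) =
      (∑ k ∈ range (n + 1), sg (k + 1) * p x (n - k))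
        + x * ∑ k ∈ range (n + 1), sg (k + 1) * dd x (n - k) := by
  have h : ((n : ℝ) + 1) ≠ 0 := by positivity
  simp only [dd, P, derivative_smul, derivative_mul, derivative_X, one_mul, derivative_sum,
    eval_smul, eval_add, eval_mul, eval_X, eval_finset_sum, smul_eq_mul, p, sg]
  field_simp

lemma sum_swap' (n : ℕ) (F : ℕ → ℕ → ℝ) :
    ∑ k ∈ range n, ∑ j ∈ range (n - k), F k j
      = ∑ j ∈ range n, ∑ k ∈ range (n - j), F k j := by
  have key : ∀ (G : ℕ → ℕ → ℝ),
      ∑ k ∈ range n, ∑ j ∈ range (n - k), G k j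
        = ∑ k ∈ range n, ∑ j ∈ range n, if k + j < n then G k j else 0 := by
    intro G
    refine Finset.sum_congr rfl fun k hk => ?_
    have hk' : k < n := Finset.mem_range.mp hk
    have hsub : range (n - k) ⊆ range n := Finset.range_subset_range.mpr (by omega)
    calc ∑ j ∈ range (n - k), G k j
        = ∑ j ∈ range (n - k), (if k + j < n then G k j else 0) := by
          refine Finset.sum_congr rfl fun j hj => ?_
          have := Finset.mem_range.mp hj
          rw [if_pos (by omega)]
      _ = ∑ j ∈ range n, (if k + j < n then G k j else 0) := by
          apply Finset.sum_subset hsub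
          intro j hj hj2
          simp only [Finset.mem_range] at hj hj2
          rw [if_neg (by omega)]
  rw [key F, Finset.sum_comm, key fun a b => F b a]
  exact Finset.sum_congr rfl fun j _ => Finset.sum_congr rfl fun k _ => by rw [add_comm]

lemma dd_formula (x : ℝ) : ∀ n, dd x n
    = ∑ k ∈ range n, (sg (k + 1) / ((k : ℝ) + 1)) * p x (n - 1 - k) := by
  intro n
  induction n using Nat.strong_induction_on with
  | _ n ih =>
    match n with
    | 0 => simp [dd_zero]
    | m + 1 =>
      have h := dd_succ x m
      have hrw : ∑ k ∈ range (m + 1), sg (k + 1) * dd x (m - k)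
          = ∑ k ∈ range (m + 1), ∑ j ∈ range (m - k),
              sg (k + 1) * ((sg (j + 1) / ((j : ℝ) + 1)) * p x (m - 1 - k - j)) := by
        refine Finset.sum_congr rfl fun k hk => ?_
        rw [ih (m - k) (by omega), Finset.mul_sum]
        refine Finset.sum_congr rfl fun j hj => ?_
        have hjj : m - k - 1 - j = m - 1 - k - j := by omega
        rw [hjj]
      have hswap : x * (∑ k ∈ range (m + 1), sg (k + 1) * dd x (m - k))
          = ∑ j ∈ range m, (sg (j + 1) / ((j : ℝ) + 1)) * (((m - j : ℕ) : ℝ) * p x (m - j)) := by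
        rw [hrw, Finset.sum_range_succ]
        simp only [Nat.sub_self, Finset.range_zero, Finset.sum_empty, add_zero]
        rw [sum_swap' m, Finset.mul_sum]
        refine Finset.sum_congr rfl fun j hj => ?_
        have hj' : j < m := Finset.mem_range.mp hj
        rw [← p_rec' x (m - j), Finset.mul_sum, Finset.mul_sum, Finset.mul_sum]
        refine Finset.sum_congr rfl fun k hk => ?_
        have hkj : m - 1 - k - j = m - j - 1 - k := by omega
        rw [hkj]; ring
      -- now show the formula
      have hm1 : ((m : ℝ) + 1) ≠ 0 := by positivity
      have hgoal : ((m : ℝ) + 1) * (∑ k ∈ range (m + 1), (sg (k + 1) / ((k : ℝ) + 1)) * p x (m - k))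
          = (∑ k ∈ range (m + 1), sg (k + 1) * p x (m - k))
            + ∑ j ∈ range m, (sg (j + 1) / ((j : ℝ) + 1)) * (((m - j : ℕ) : ℝ) * p x (m - j)) := by
        have hext : ∑ j ∈ range m, (sg (j + 1) / ((j : ℝ) + 1)) * (((m - j : ℕ) : ℝ) * p x (m - j))
            = ∑ j ∈ range (m + 1), (sg (j + 1) / ((j : ℝ) + 1)) * (((m - j : ℕ) : ℝ) * p x (m - j)) := by
          rw [Finset.sum_range_succ]
          simp
        rw [hext, Finset.mul_sum, ← Finset.sum_add_distrib]
        refine Finset.sum_congr rfl fun k hk => ?_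
        have hk' : k < m + 1 := Finset.mem_range.mp hk
        have hcast : ((m - k : ℕ) : ℝ) = (m : ℝ) - (k : ℝ) := by
          have : k ≤ m := by omega
          push_cast [this]; ring
        rw [hcast]
        have hk1 : ((k : ℝ) + 1) ≠ 0 := by positivity
        field_simp
        ring
      rw [hswap] at h
      have hfin := mul_left_cancel₀ hm1 (h.trans hgoal.symm)
      rw [hfin]
      norm_num

lemma S_pos (x : ℝ) (hx : 2 ≤ x) (t : ℕ) (ht : 1 ≤ t) :
    0 < ∑ k ∈ range t, (x * (sg (k + 1) / ((k : ℝ) + 1)) - sg (k + 2) / ((k : ℝ) + 2)) := by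
  have hlb : ∀ k ∈ range t,
      (2 : ℝ) * (sg (k + 1) / ((k : ℝ) + 1)) - sg (k + 2) / ((k : ℝ) + 2)
        ≤ x * (sg (k + 1) / ((k : ℝ) + 1)) - sg (k + 2) / ((k : ℝ) + 2) := by
    intro k _
    have hs : 0 ≤ sg (k + 1) / ((k : ℝ) + 1) :=
      div_nonneg (sg_nonneg _) (by positivity)
    nlinarith
  have h2 := Finset.sum_le_sum hlb
  have htel : ∑ k ∈ range t,
      ((sg (k + 1) / ((k : ℝ) + 1)) - sg (k + 2) / (((k + 1 : ℕ) : ℝ) + 1))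
        = sg 1 / ((0 : ℝ) + 1) - sg (t + 1) / ((t : ℝ) + 1) := by
    have := Finset.sum_range_sub' (f := fun i => sg (i + 1) / ((i : ℝ) + 1)) t
    convert this using 2 <;> push_cast <;> ring_nf
  have hsum1 : (t : ℝ) ≤ ∑ k ∈ range t, sg (k + 1) / ((k : ℝ) + 1) := by
    have : ∀ k ∈ range t, (1 : ℝ) ≤ sg (k + 1) / ((k : ℝ) + 1) := by
      intro k _
      rw [le_div_iff₀ (by positivity)]
      have := le_sg (k + 1) (by omega)
      push_cast at this ⊢
      linarith
    calc (t : ℝ) = ∑ _k ∈ range t, (1 : ℝ) := by simp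
      _ ≤ _ := Finset.sum_le_sum this
  have hst : sg (t + 1) / ((t : ℝ) + 1) < (t : ℝ) + 1 := by
    rw [div_lt_iff₀ (by positivity)]
    have := sg_lt (t + 1) (by omega)
    push_cast at this ⊢
    nlinarith
  have hsplit : ∑ k ∈ range t,
      ((2 : ℝ) * (sg (k + 1) / ((k : ℝ) + 1)) - sg (k + 2) / ((k : ℝ) + 2))
      = (∑ k ∈ range t, sg (k + 1) / ((k : ℝ) + 1))
        + ∑ k ∈ range t, ((sg (k + 1) / ((k : ℝ) + 1)) - sg (k + 2) / (((k + 1 : ℕ) : ℝ) + 1)) := by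
    rw [← Finset.sum_add_distrib]
    refine Finset.sum_congr rfl fun k _ => ?_
    push_cast
    ring
  have hpos : 0 < (∑ k ∈ range t, sg (k + 1) / ((k : ℝ) + 1))
      + (sg 1 / ((0 : ℝ) + 1) - sg (t + 1) / ((t : ℝ) + 1)) := by
    rw [sg_one]
    have ht' : (1 : ℝ) ≤ (t : ℝ) := by exact_mod_cast ht
    linarith
  calc (0 : ℝ) < _ := hpos
    _ = ∑ k ∈ range t, ((2 : ℝ) * (sg (k + 1) / ((k : ℝ) + 1)) - sg (k + 2) / ((k : ℝ) + 2)) := by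
        rw [hsplit, htel]
    _ ≤ _ := Finset.sum_le_sum hlb

lemma P_zero : P 0 = 1 := by rw [P]

lemma P_one : P 1 = X := by
  rw [P]
  norm_num [P]

theorem stmt4 (a : ℕ) (ha : 2 < a) (x : ℝ) (hx : 2 ≤ x) :
    0 < (Polynomial.derivative (Δ a 0)).eval x := by
  obtain ⟨b, rfl⟩ : ∃ b, a = b + 1 := ⟨a - 1, by omega⟩
  have hb : 2 ≤ b := by omega
  have hval : (Polynomial.derivative (Δ (b + 1) 0)).eval x
      = x * dd x b + p x b - dd x (b + 1) := by
    have h0 : Δ (b + 1) 0 = P b * X - P (b + 1) := by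
      simp [Δ, P_one, P_zero]
    rw [h0]
    simp only [derivative_sub, derivative_mul, derivative_X, mul_one, eval_sub, eval_add,
      eval_mul, eval_X]
    simp [dd, p]
    ring
  rw [hval]
  -- rewrite as single sum of c_k * p
  have hd1 : dd x (b + 1) = ∑ k ∈ range b, (sg (k + 2) / ((k : ℝ) + 2)) * p x (b - 1 - k) + p x b := by
    rw [dd_formula x (b + 1), Finset.sum_range_succ']
    congr 1
    · refine Finset.sum_congr rfl fun k hk => ?_
      have : b + 1 - 1 - (k + 1) = b - 1 - k := by omega
      rw [this]
      push_cast
      ring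
    · norm_num [sg_one]
  have hV : x * dd x b + p x b - dd x (b + 1)
      = ∑ k ∈ range b, (x * (sg (k + 1) / ((k : ℝ) + 1)) - sg (k + 2) / ((k : ℝ) + 2))
          * p x (b - 1 - k) := by
    rw [hd1, dd_formula x b, Finset.mul_sum]
    have e1 : ∑ k ∈ range b, (x * (sg (k + 1) / ((k : ℝ) + 1)) - sg (k + 2) / ((k : ℝ) + 2))
          * p x (b - 1 - k)
        = (∑ k ∈ range b, x * (sg (k + 1) / ((k : ℝ) + 1) * p x (b - 1 - k)))
          - ∑ k ∈ range b, sg (k + 2) / ((k : ℝ) + 2) * p x (b - 1 - k) := by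
      rw [← Finset.sum_sub_distrib]
      exact Finset.sum_congr rfl fun k _ => by ring
    rw [e1]
    ring
  rw [hV]
  -- expand p as sum of q and swap
  have hpq : ∀ k ∈ range b, (x * (sg (k + 1) / ((k : ℝ) + 1)) - sg (k + 2) / ((k : ℝ) + 2))
          * p x (b - 1 - k)
      = ∑ j ∈ range (b - k), (x * (sg (k + 1) / ((k : ℝ) + 1)) - sg (k + 2) / ((k : ℝ) + 2))
          * q x j := by
    intro k hk
    have hk' : k < b := Finset.mem_range.mp hk
    have h1 : b - k = (b - 1 - k) + 1 := by omega
    rw [h1, ← Finset.mul_sum, sum_q]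
  rw [Finset.sum_congr rfl hpq, sum_swap' b]
  apply Finset.sum_pos'
  · intro j hj
    have hq := q_nonneg x hx j
    have hj' : j < b := Finset.mem_range.mp hj
    have hS := S_pos x hx (b - j) (by omega)
    calc (0 : ℝ) ≤ (∑ k ∈ range (b - j),
          (x * (sg (k + 1) / ((k : ℝ) + 1)) - sg (k + 2) / ((k : ℝ) + 2))) * q x j :=
        mul_nonneg hS.le hq
      _ = ∑ k ∈ range (b - j),
          (x * (sg (k + 1) / ((k : ℝ) + 1)) - sg (k + 2) / ((k : ℝ) + 2)) * q x j := by
        rw [Finset.sum_mul]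
  · refine ⟨0, Finset.mem_range.mpr (by omega), ?_⟩
    have hS := S_pos x hx b (by omega)
    simpa [q] using hS
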